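/- Let R be a ring and F : (ModuleCat R)ᵒᵖ ⥤ Ab an additive contravariant functor that is half-exact. Let B be an R-module with injective resolution 0 → B → I⁰ → I¹ → ⋯, and for j ≥ 1 let ΣʲB denote the j-th cosyzygy (Σ⁰B = B, ΣʲB = coker(Σʲ⁻¹B ↪ Iʲ⁻¹)), with canonical monomorphisms ΣʲB ↪ Iʲ and epimorphisms Iʲ⁻¹ ↠ ΣʲB. Then the long sequence of abelian groups ⋯ → H₂(F(I^•)) → ker(F(Σ²B) → F(I¹)) → coker(F(I²) → F(Σ²B)) → H₁(F(I^•)) → ker(F(ΣB) → F(I⁰)) → coker(F(I¹) → F(ΣB)) → H₀(F(I^•)) → F(B) → coker(F(I⁰) → F(B)) → 0, where Hⱼ(F(I^•)) is the homology of the chain complex ⋯ → F(I¹) → F(I⁰) at F(Iʲ), the maps F(ΣʲB) → F(Iʲ⁻¹) are induced by the epimorphisms Iʲ⁻¹ ↠ ΣʲB, the maps F(Iʲ) → F(ΣʲB) are induced by the monomorphisms ΣʲB ↪ Iʲ, the map F(I⁰) → F(B) is induced by B ↪ I⁰, and the remaining maps are the canonically induced ones, is exact. -/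

import Mathlib

/-!
Set `f = F(Σʲ⁺¹B ↪ Iʲ⁺¹)` and `g = F(Iʲ ↠ Σʲ⁺¹B)`, so that `f ≫ g` is the differential
`F(Iʲ⁺¹) → F(Iʲ)`. At `ker g` and at `coker f` the sequence is exact for formal reasons: there it
is a piece of the kernel–cokernel sequence of the composition `f ≫ g`. At `F(B)` and at the
homology groups `Hⱼ` the sequence is a quotient of a simpler exact one, namely
`F(I⁰) → F(B) → coker`, or the sequence `F(Σʲ⁺¹B) → F(Iʲ) → F(ΣʲB)` given by half-exactness
(restricted to the cycles when `j ≥ 1`). Exactness passes to the target of a morphism of short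
complexes that is epi in the middle and mono on the right, and to the source of one that is epi
on the left and mono in the middle.
-/

open CategoryTheory Limits Opposite

set_option linter.unusedSectionVars false

namespace ContraLeftFundamentalSeq

universe u v w

/-- The data of an injective resolution `0 → B → I⁰ → I¹ → ⋯` of the module `B = S 0`
together with its cosyzygies `S j = Σʲ B`, encoded by composable pairs
`Σʲ B →(m j) Iʲ →(e j) Σʲ⁺¹ B` with `m j ≫ e j = 0` (each such pair is required to be a
short exact sequence in the main theorem). -/
structure CosyzygyData (R : Type u) [Ring R] where
  /-- the cosyzygy modules, `S 0` being the given module `B` -/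
  S : ℕ → ModuleCat.{v} R
  /-- the modules of the injective resolution -/
  I : ℕ → ModuleCat.{v} R
  /-- the canonical monomorphisms `Σʲ B ↪ Iʲ` -/
  m : ∀ j, S j ⟶ I j
  /-- the canonical epimorphisms `Iʲ ↠ Σʲ⁺¹ B` -/
  e : ∀ j, I j ⟶ S (j + 1)
  wme : ∀ j, m j ≫ e j = 0

variable {R : Type u} [Ring R]
variable (F : (ModuleCat.{v} R)ᵒᵖ ⥤ AddCommGrpCat.{w}) [F.Additive] (D : CosyzygyData.{u, v} R)

namespace CosyzygyData

/-- The differential `Iʲ ⟶ Iʲ⁺¹` of the injective resolution. -/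
def d (j : ℕ) : D.I j ⟶ D.I (j + 1) := D.e j ≫ D.m (j + 1)

end CosyzygyData

/-- `K j = ker (F(Σʲ⁺¹ B) → F(Iʲ))`, induced by the epimorphism `Iʲ ↠ Σʲ⁺¹ B`. -/
noncomputable def K (j : ℕ) : AddCommGrpCat.{w} := kernel (F.map (D.e j).op)

/-- `Cok j = coker (F(Iʲ) → F(Σʲ B))`, induced by the monomorphism `Σʲ B ↪ Iʲ`
(for `j = 0` this is `coker (F(I⁰) → F(B))`). -/
noncomputable def Cok (j : ℕ) : AddCommGrpCat.{w} := cokernel (F.map (D.m j).op)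

/-- The `j`-cycles `Z j = ker (F(Iʲ⁺¹) → F(Iʲ))` of the chain complex `F(I^•)`. -/
noncomputable def Z (j : ℕ) : AddCommGrpCat.{w} := kernel (F.map (D.d j).op)

/-- The lift `ℓ j : F(Iʲ⁺²) ⟶ Z j` of the chain differential. -/
noncomputable def l (j : ℕ) : F.obj (op (D.I (j + 2))) ⟶ Z F D j :=
  kernel.lift _ (F.map (D.d (j + 1)).op) (by
    rw [← F.map_comp]
    show F.map ((D.e j ≫ (D.m (j + 1) ≫ D.e (j + 1)) ≫ D.m (j + 2)).op) = 0
    rw [D.wme (j + 1), zero_comp, comp_zero]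
    exact F.map_zero _ _)

/-- The homology `Hⱼ(F(I^•))` of the chain complex `⋯ → F(I¹) → F(I⁰)` at `F(Iʲ)`:
`H 0 = coker(F(I¹) → F(I⁰))` and `H (j+1) = Z j / im F(Iʲ⁺²)`. -/
noncomputable def H : ℕ → AddCommGrpCat.{w}
  | 0 => cokernel (F.map (D.d 0).op)
  | (j + 1) => cokernel (l F D j)

/-- The canonical map `F(Σʲ⁺² B) ⟶ Z j` induced by the epimorphism `Iʲ⁺¹ ↠ Σʲ⁺² B`. -/
noncomputable def zmap (j : ℕ) : F.obj (op (D.S (j + 2))) ⟶ Z F D j :=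
  kernel.lift _ (F.map (D.e (j + 1)).op) (by
    rw [← F.map_comp]
    show F.map ((D.e j ≫ D.m (j + 1) ≫ D.e (j + 1)).op) = 0
    rw [D.wme (j + 1), comp_zero]
    exact F.map_zero _ _)

lemma comp_zmap (j : ℕ) : F.map (D.m (j + 2)).op ≫ zmap F D j = l F D j := by
  apply (cancel_mono (kernel.ι (F.map (D.d j).op))).1
  erw [Category.assoc, zmap, kernel.lift_ι, l, kernel.lift_ι, ← F.map_comp]
  rfl

/-- The canonical map `coker(F(Iʲ⁺¹) → F(Σʲ⁺¹ B)) ⟶ Hⱼ(F(I^•))`. -/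
noncomputable def toH : ∀ j, Cok F D (j + 1) ⟶ H F D j
  | 0 => cokernel.desc (F.map (D.m 1).op)
      (F.map (D.e 0).op ≫ cokernel.π (F.map (D.d 0).op)) (by
        erw [← Category.assoc, ← F.map_comp]
        exact cokernel.condition _)
  | (j + 1) => cokernel.desc (F.map (D.m (j + 2)).op)
      (zmap F D j ≫ cokernel.π (l F D j)) (by
        erw [← Category.assoc, comp_zmap, cokernel.condition]; rfl)

/-- The canonical map `H₀(F(I^•)) ⟶ F(B)` induced by the monomorphism `B ↪ I⁰`. -/
noncomputable def fromH0 : H F D 0 ⟶ F.obj (op (D.S 0)) :=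
  cokernel.desc (F.map (D.d 0).op) (F.map (D.m 0).op) (by
    rw [← F.map_comp]
    show F.map (((D.m 0 ≫ D.e 0) ≫ D.m 1).op) = 0
    rw [D.wme 0, zero_comp]
    exact F.map_zero _ _)

/-- The canonical projection `F(B) ⟶ coker(F(I⁰) → F(B))`. -/
noncomputable def π0 : F.obj (op (D.S 0)) ⟶ Cok F D 0 := cokernel.π (F.map (D.m 0).op)

/-- The canonical map `ker(F(Σʲ⁺¹B) → F(Iʲ)) ⟶ coker(F(Iʲ⁺¹) → F(Σʲ⁺¹B))`. -/
noncomputable def fromK (j : ℕ) : K F D j ⟶ Cok F D (j + 1) :=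
  kernel.ι (F.map (D.e j).op) ≫ cokernel.π (F.map (D.m (j + 1)).op)

/-- The canonical map `Z j ⟶ K j` induced by the monomorphism `Σʲ⁺¹ B ↪ Iʲ⁺¹`. -/
noncomputable def toK (j : ℕ) : Z F D j ⟶ K F D j :=
  kernel.lift _ (kernel.ι (F.map (D.d j).op) ≫ F.map (D.m (j + 1)).op) (by
    erw [Category.assoc, ← F.map_comp]
    exact kernel.condition _)

/-- The connecting map `Hⱼ₊₁(F(I^•)) ⟶ ker(F(Σʲ⁺¹B) → F(Iʲ))`. -/
noncomputable def conn (j : ℕ) : H F D (j + 1) ⟶ K F D j :=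
  cokernel.desc (l F D j) (toK F D j) (by
    apply (cancel_mono (kernel.ι (F.map (D.e j).op))).1
    erw [Category.assoc, zero_comp]
    show l F D j ≫ toK F D j ≫ kernel.ι _ = 0
    erw [toK, kernel.lift_ι, ← Category.assoc, l, kernel.lift_ι, ← F.map_comp]
    show F.map (((D.m (j + 1) ≫ D.e (j + 1)) ≫ D.m (j + 2)).op) = 0
    erw [D.wme (j + 1), zero_comp]
    exact F.map_zero _ _)

lemma w₁ : fromH0 F D ≫ π0 F D = 0 := by
  apply (cancel_epi (cokernel.π (F.map (D.d 0).op))).1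
  erw [comp_zero, ← Category.assoc, fromH0, cokernel.π_desc, π0, cokernel.condition]; rfl

lemma w₂ : toH F D 0 ≫ fromH0 F D = 0 := by
  apply (cancel_epi (cokernel.π (F.map (D.m 1).op))).1
  erw [comp_zero, ← Category.assoc, toH, cokernel.π_desc, Category.assoc, fromH0,
    cokernel.π_desc, ← F.map_comp, ← op_comp, D.wme 0]
  exact F.map_zero _ _

lemma w₃ : ∀ j, fromK F D j ≫ toH F D j = 0
  | 0 => by
      erw [fromK, Category.assoc, toH, cokernel.π_desc, ← Category.assoc,
        kernel.condition, zero_comp]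
  | (j + 1) => by
      erw [fromK, Category.assoc, toH, cokernel.π_desc, ← Category.assoc]
      have h : kernel.ι (F.map (D.e (j + 1)).op) ≫ zmap F D j = 0 := by
        apply (cancel_mono (kernel.ι (F.map (D.d j).op))).1
        erw [Category.assoc, zmap, kernel.lift_ι, kernel.condition, zero_comp]
      erw [h, zero_comp]

lemma w₄ (j : ℕ) : conn F D j ≫ fromK F D j = 0 := by
  apply (cancel_epi (cokernel.π (l F D j))).1
  erw [comp_zero, ← Category.assoc, conn, cokernel.π_desc, fromK, ← Category.assoc,
    toK, kernel.lift_ι, Category.assoc, cokernel.condition, comp_zero]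

lemma w₅ (j : ℕ) : toH F D (j + 1) ≫ conn F D j = 0 := by
  apply (cancel_epi (cokernel.π (F.map (D.m (j + 2)).op))).1
  erw [comp_zero, ← Category.assoc, toH, cokernel.π_desc, Category.assoc, conn,
    cokernel.π_desc]
  apply (cancel_mono (kernel.ι (F.map (D.e j).op))).1
  erw [Category.assoc, zero_comp]
  show zmap F D j ≫ toK F D j ≫ kernel.ι _ = 0
  erw [toK, kernel.lift_ι, ← Category.assoc, zmap, kernel.lift_ι, ← F.map_comp, ← op_comp,
    D.wme (j + 1)]
  exact F.map_zero _ _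

section Abelian

variable {C : Type*} [Category C] [Abelian C]

lemma _root_.CategoryTheory.ShortComplex.Exact.of_epi_τ₂_of_mono_τ₃ {S₁ S₂ : ShortComplex C}
    (h₁ : S₁.Exact) (φ : S₁ ⟶ S₂) (_ : Epi φ.τ₂) (_ : Mono φ.τ₃) : S₂.Exact := by
  rw [ShortComplex.exact_iff_exact_up_to_refinements] at h₁ ⊢
  intro A x₂ hx₂
  obtain ⟨A', π, hπ, y₂, hy₂⟩ := surjective_up_to_refinements_of_epi φ.τ₂ x₂
  have hy : y₂ ≫ S₁.g = 0 := by
    rw [← cancel_mono φ.τ₃, Category.assoc, ← φ.comm₂₃, ← Category.assoc, ← hy₂,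
      Category.assoc, hx₂, comp_zero, zero_comp]
  obtain ⟨A'', π', hπ', y₁, hy₁⟩ := h₁ y₂ hy
  refine ⟨A'', π' ≫ π, epi_comp _ _, y₁ ≫ φ.τ₁, ?_⟩
  rw [Category.assoc, hy₂, ← Category.assoc, hy₁, Category.assoc, Category.assoc, φ.comm₁₂]

lemma _root_.CategoryTheory.ShortComplex.Exact.of_epi_τ₁_of_mono_τ₂ {S₁ S₂ : ShortComplex C}
    (h₂ : S₂.Exact) (φ : S₁ ⟶ S₂) (_ : Epi φ.τ₁) (_ : Mono φ.τ₂) : S₁.Exact := by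
  rw [ShortComplex.exact_iff_exact_up_to_refinements] at h₂ ⊢
  intro A x₂ hx₂
  obtain ⟨A', π, hπ, y₁, hy₁⟩ := h₂ (x₂ ≫ φ.τ₂) (by
    rw [Category.assoc, φ.comm₂₃, reassoc_of% hx₂, zero_comp])
  obtain ⟨A'', π', hπ', z₁, hz₁⟩ := surjective_up_to_refinements_of_epi φ.τ₁ y₁
  refine ⟨A'', π' ≫ π, epi_comp _ _, z₁, ?_⟩
  rw [← cancel_mono φ.τ₂]
  simp only [Category.assoc]
  rw [hy₁, reassoc_of% hz₁, φ.comm₁₂]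

variable {X Y Z Z' : C}

lemma kernel_ι_comp_eq_zero_of_comp_mono (g : Y ⟶ Z) (ι : Z ⟶ Z') [Mono ι] {g' : Y ⟶ Z'}
    (w : g ≫ ι = g') : kernel.ι g' ≫ g = 0 := by
  rw [← cancel_mono ι, Category.assoc, w, kernel.condition, zero_comp]

lemma kernelCokernelComp_exact_at_kernel (f : X ⟶ Y) (g : Y ⟶ Z) {h : X ⟶ Z}
    (w : f ≫ g = h) :
    (ShortComplex.mk (kernel.lift g (kernel.ι h ≫ f) (by rw [Category.assoc, w, kernel.condition]))
      (kernel.ι g ≫ cokernel.π f) (by simp)).Exact := by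
  subst w
  have hδ : (ShortComplex.mk (kernel.map (f ≫ g) g f (𝟙 _) (by simp))
      (kernelCokernelCompSequence.δ f g) (by simp [kernelCokernelCompSequence.δ_fac])).Exact :=
    (kernelCokernelCompSequence_exact f g).exact 1
  -- the connecting map of `kernelCokernelCompSequence` is `-(kernel.ι g ≫ cokernel.π f)`
  exact hδ.of_epi_τ₂_of_mono_τ₃
    { τ₁ := 𝟙 _
      τ₂ := 𝟙 _
      τ₃ := -𝟙 _
      comm₂₃ := by simp [kernelCokernelCompSequence.δ_fac] } inferInstance inferInstance

lemma kernelCokernelComp_exact_at_cokernel (f : X ⟶ Y) (g : Y ⟶ Z) {h : X ⟶ Z}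
    (w : f ≫ g = h) (ι : Z ⟶ Z') (_ : Mono ι) {g' : Y ⟶ Z'} (w' : g ≫ ι = g') :
    (ShortComplex.mk (kernel.ι g' ≫ cokernel.π f)
      (cokernel.desc f (g ≫ cokernel.π h) (by rw [← Category.assoc, w, cokernel.condition]))
      (by simp [reassoc_of% kernel_ι_comp_eq_zero_of_comp_mono g ι w'])).Exact := by
  subst w w'
  have hδ : (ShortComplex.mk (kernelCokernelCompSequence.δ f g)
      (cokernel.map f (f ≫ g) (𝟙 _) g (by simp))
      (by simp [kernelCokernelCompSequence.δ_fac])).Exact :=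
    (kernelCokernelCompSequence_exact f g).exact 2
  exact hδ.of_epi_τ₂_of_mono_τ₃
    { τ₁ := -kernel.lift (g ≫ ι) (kernel.ι g) (by simp)
      τ₂ := 𝟙 _
      τ₃ := 𝟙 _
      comm₁₂ := by simp [kernelCokernelCompSequence.δ_fac] } inferInstance inferInstance

end Abelian

lemma map_m_comp_map_e (j : ℕ) :
    F.map (D.m (j + 1)).op ≫ F.map (D.e j).op = F.map (D.d j).op := by
  rw [← F.map_comp, ← op_comp, CosyzygyData.d]

lemma map_e_comp_map_m (j : ℕ) : F.map (D.e j).op ≫ F.map (D.m j).op = 0 := by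
  rw [← F.map_comp, ← op_comp, D.wme, op_zero, F.map_zero]

lemma zmap_comp_kernel_ι (j : ℕ) :
    zmap F D j ≫ kernel.ι (F.map (D.d j).op) = F.map (D.e (j + 1)).op :=
  kernel.lift_ι _ _ _

lemma toK_comp_kernel_ι (j : ℕ) :
    toK F D j ≫ kernel.ι (F.map (D.e j).op) =
      kernel.ι (F.map (D.d j).op) ≫ F.map (D.m (j + 1)).op :=
  kernel.lift_ι _ _ _

lemma cokernel_π_comp_fromH0 : cokernel.π (F.map (D.d 0).op) ≫ fromH0 F D = F.map (D.m 0).op :=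
  cokernel.π_desc _ _ _

lemma cokernel_π_comp_toH_zero :
    cokernel.π (F.map (D.m 1).op) ≫ toH F D 0 = F.map (D.e 0).op ≫ cokernel.π (F.map (D.d 0).op) :=
  cokernel.π_desc _ _ _

lemma cokernel_π_comp_toH_succ (j : ℕ) :
    cokernel.π (F.map (D.m (j + 2)).op) ≫ toH F D (j + 1) = zmap F D j ≫ cokernel.π (l F D j) :=
  cokernel.π_desc _ _ _

lemma cokernel_π_comp_conn (j : ℕ) : cokernel.π (l F D j) ≫ conn F D j = toK F D j :=
  cokernel.π_desc _ _ _

lemma zmap_comp_toK (j : ℕ) : zmap F D j ≫ toK F D j = 0 :=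
  (cancel_mono (kernel.ι (F.map (D.e j).op))).1 <| calc
    (zmap F D j ≫ toK F D j) ≫ kernel.ι _ = zmap F D j ≫ toK F D j ≫ kernel.ι _ :=
      Category.assoc _ _ _
    _ = (zmap F D j ≫ kernel.ι _) ≫ F.map (D.m (j + 1)).op := by
      rw [toK_comp_kernel_ι]; exact (Category.assoc _ _ _).symm
    _ = 0 ≫ _ := by rw [zmap_comp_kernel_ι, map_e_comp_map_m, zero_comp]

lemma exact_fromH0_π0 : (ShortComplex.mk _ _ (w₁ F D)).Exact :=
  (ShortComplex.exact_of_g_is_cokernel (S := .mk _ (π0 F D) (cokernel.condition _))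
    (cokernelIsCokernel _)).of_epi_τ₂_of_mono_τ₃
    { τ₁ := cokernel.π (F.map (D.d 0).op)
      τ₂ := 𝟙 _
      τ₃ := 𝟙 _
      comm₁₂ := by rw [Category.comp_id]; exact cokernel_π_comp_fromH0 F D }
    inferInstance inferInstance

lemma exact_toH_zero_fromH0 (hF : (ShortComplex.mk _ _ (map_e_comp_map_m F D 0)).Exact) :
    (ShortComplex.mk _ _ (w₂ F D)).Exact :=
  hF.of_epi_τ₂_of_mono_τ₃
    { τ₁ := cokernel.π (F.map (D.m 1).op)
      τ₂ := cokernel.π (F.map (D.d 0).op)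
      τ₃ := 𝟙 _
      comm₁₂ := cokernel_π_comp_toH_zero F D
      comm₂₃ := by rw [Category.comp_id]; exact cokernel_π_comp_fromH0 F D }
    (inferInstance : Epi (cokernel.π _)) inferInstance

lemma exact_fromK_toH : ∀ j, (ShortComplex.mk _ _ (w₃ F D j)).Exact
  | 0 => kernelCokernelComp_exact_at_cokernel _ _ (map_m_comp_map_e F D 0) (𝟙 _)
      inferInstance (Category.comp_id _)
  | j + 1 => kernelCokernelComp_exact_at_cokernel _ _ (comp_zmap F D j) _
      (inferInstance : Mono (kernel.ι _)) (zmap_comp_kernel_ι F D j)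

lemma exact_conn_fromK (j : ℕ) : (ShortComplex.mk _ _ (w₄ F D j)).Exact :=
  (kernelCokernelComp_exact_at_kernel _ _ (map_m_comp_map_e F D j)).of_epi_τ₂_of_mono_τ₃
    { τ₁ := cokernel.π (l F D j)
      τ₂ := 𝟙 _
      τ₃ := 𝟙 _
      comm₁₂ := (cokernel_π_comp_conn F D j).trans (Category.comp_id _).symm }
    (inferInstance : Epi (𝟙 _)) (inferInstance : Mono (𝟙 _))

lemma exact_zmap_toK (j : ℕ) (hF : (ShortComplex.mk _ _ (map_e_comp_map_m F D (j + 1))).Exact) :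
    (ShortComplex.mk _ _ (zmap_comp_toK F D j)).Exact :=
  hF.of_epi_τ₁_of_mono_τ₂
    { τ₁ := 𝟙 _
      τ₂ := kernel.ι _
      τ₃ := kernel.ι _
      comm₁₂ := by rw [Category.id_comp]; exact (zmap_comp_kernel_ι F D j).symm
      comm₂₃ := (toK_comp_kernel_ι F D j).symm }
    inferInstance (inferInstance : Mono (kernel.ι _))

lemma exact_toH_conn (j : ℕ) (hF : (ShortComplex.mk _ _ (map_e_comp_map_m F D (j + 1))).Exact) :
    (ShortComplex.mk _ _ (w₅ F D j)).Exact :=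
  (exact_zmap_toK F D j hF).of_epi_τ₂_of_mono_τ₃
    { τ₁ := cokernel.π (F.map (D.m (j + 2)).op)
      τ₂ := cokernel.π (l F D j)
      τ₃ := 𝟙 _
      comm₁₂ := cokernel_π_comp_toH_succ F D j
      comm₂₃ := by rw [Category.comp_id]; exact cokernel_π_comp_conn F D j }
    (inferInstance : Epi (cokernel.π _)) inferInstance

/-- **The left fundamental sequence of a half-exact contravariant functor (computed with an
injective resolution) is exact.**
Let `F` be an additive half-exact contravariant functor from `R`-modules to abelian groups
and `0 → B → I⁰ → I¹ → ⋯` an injective resolution of `B = S 0` with cosyzygies `Σʲ B = S j`.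
Then the long sequence
`⋯ → H₂(F(I^•)) → ker(F(Σ²B) → F(I¹)) → coker(F(I²) → F(Σ²B)) → H₁(F(I^•)) →`
`ker(F(ΣB) → F(I⁰)) → coker(F(I¹) → F(ΣB)) → H₀(F(I^•)) → F(B) → coker(F(I⁰) → F(B)) → 0`,
with all maps the canonically induced ones, is exact. -/
theorem contra_left_fundamental_sequence_exact
    (hhalf : ∀ ⦃X Y Z : ModuleCat.{v} R⦄ (f : X ⟶ Y) (g : Y ⟶ Z) (w : f ≫ g = 0),
      (ShortComplex.mk f g w).ShortExact →
      (ShortComplex.mk (F.map g.op) (F.map f.op)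
        (by rw [← F.map_comp, ← op_comp, w]; exact F.map_zero _ _)).Exact)
    (hres : ∀ j, (ShortComplex.mk (D.m j) (D.e j) (D.wme j)).ShortExact) :
    Epi (π0 F D) ∧
    (ShortComplex.mk _ _ (w₁ F D)).Exact ∧
    (ShortComplex.mk _ _ (w₂ F D)).Exact ∧
    (∀ j, (ShortComplex.mk _ _ (w₃ F D j)).Exact) ∧
    (∀ j, (ShortComplex.mk _ _ (w₄ F D j)).Exact) ∧
    (∀ j, (ShortComplex.mk _ _ (w₅ F D j)).Exact) := by
  have hF (j : ℕ) : (ShortComplex.mk _ _ (map_e_comp_map_m F D j)).Exact :=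
    hhalf _ _ _ (hres j)
  exact ⟨inferInstanceAs (Epi (cokernel.π _)), exact_fromH0_π0 F D,
    exact_toH_zero_fromH0 F D (hF 0), exact_fromK_toH F D, exact_conn_fromK F D,
    fun j => exact_toH_conn F D j (hF (j + 1))⟩

end ContraLeftFundamentalSeq
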